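/- Let h be a normalized Thiele counting function (h(0)=0, h(1)=1) with h(x) > 1 for some x ∈ {2,...,m-1}, and let x be minimal such. Then the sequential Thiele rule induced by h fails clone-rejection: in the profile with ℓ voters approving {c₁,...,c_x} (where ℓ·(h(x)−1) > 1), x voters approving {c₁,c₂}, and for each i ∈ {3,...,x+1}, x+2−i voters approving only c_i, the rule uniquely elects {c₁,...,c_x} at size x, a committee containing the clones c₁ and c₂. -/
import Mathlib


open Finset
open scoped Classical

structure Profile (C : Type) where
  voters : Finset ℕ
  ballot : ℕ → Finset C

namespace Profile

variable {C : Type}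

def combine (A B : Profile C) : Profile C :=
  ⟨A.voters ∪ B.voters, fun i => if i ∈ A.voters then A.ballot i else B.ballot i⟩

def Disj (A B : Profile C) : Prop := Disjoint A.voters B.voters

def permVoters (π : Equiv.Perm ℕ) (A : Profile C) : Profile C :=
  ⟨A.voters.map π.toEmbedding, fun i => A.ballot (π.symm i)⟩

def mapCand [DecidableEq C] (τ : Equiv.Perm C) (A : Profile C) : Profile C :=
  ⟨A.voters, fun i => (A.ballot i).image τ⟩

end Profile

variable {C : Type} [Fintype C] [DecidableEq C]

noncomputable def scoreV (v : Finset C → Finset C → ℝ) (A : Profile C) (W : Finset C) : ℝ :=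
  ∑ i ∈ A.voters, v (A.ballot i) W

/-- The candidates whose addition to `W` maximizes the total score. -/
noncomputable def genOf (v : Finset C → Finset C → ℝ) (A : Profile C) (W : Finset C) : Finset C :=
  (univ \ W).filter fun x => ∀ y ∈ univ \ W, scoreV v A (insert y W) ≤ scoreV v A (insert x W)

/-- The sequential valuation rule induced by the valuation function `v`. -/
noncomputable def seqRule (v : Finset C → Finset C → ℝ) : Profile C → ℕ → Finset (Finset C)
  | _, 0 => {∅}
  | A, k+1 => (seqRule v A k).biUnion fun W => (genOf v A W).image fun x => insert x W

/-- A Thiele counting function: non-negative, non-decreasing, with `h 1 > h 0`. -/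
def IsThiele (h : ℕ → ℝ) : Prop := (∀ x, 0 ≤ h x) ∧ Monotone h ∧ h 0 < h 1

/-- The sequential Thiele rule induced by the counting function `h`. -/
noncomputable def seqThiele (h : ℕ → ℝ) : Profile C → ℕ → Finset (Finset C) :=
  seqRule fun b W => h ((b ∩ W).card)


section Helpers

variable {C : Type} [Fintype C] [DecidableEq C]

lemma seqRule_zero (v : Finset C → Finset C → ℝ) (A : Profile C) : seqRule v A 0 = {∅} := rfl

lemma seqRule_succ (v : Finset C → Finset C → ℝ) (A : Profile C) (k : ℕ) :
    seqRule v A (k+1) = (seqRule v A k).biUnion fun W => (genOf v A W).image fun x => insert x W :=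
  rfl

lemma genOf_eq_singleton (v : Finset C → Finset C → ℝ) (A : Profile C) (W : Finset C) (z : C)
    (hz : z ∉ W)
    (hlt : ∀ y, y ∉ W → y ≠ z → scoreV v A (insert y W) < scoreV v A (insert z W)) :
    genOf v A W = {z} := by
  ext y
  simp only [genOf, mem_filter, mem_sdiff, mem_univ, true_and, mem_singleton]
  constructor
  · rintro ⟨hyW, hmax⟩
    by_contra hne
    exact absurd (hmax z (by simp [hz])) (not_le.2 (hlt y hyW hne))
  · rintro rfl
    refine ⟨hz, fun w hw => ?_⟩
    rcases eq_or_ne w y with rfl | hne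
    · exact le_refl _
    · exact (hlt w (by simpa using hw) hne).le

lemma genOf_eq_pair (v : Finset C → Finset C → ℝ) (A : Profile C) (W : Finset C) (z₁ z₂ : C)
    (hz1 : z₁ ∉ W) (hz2 : z₂ ∉ W)
    (heq : scoreV v A (insert z₁ W) = scoreV v A (insert z₂ W))
    (hlt : ∀ y, y ∉ W → y ≠ z₁ → y ≠ z₂ → scoreV v A (insert y W) < scoreV v A (insert z₁ W)) :
    genOf v A W = {z₁, z₂} := by
  ext y
  simp only [genOf, mem_filter, mem_sdiff, mem_univ, true_and, mem_insert, mem_singleton]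
  constructor
  · rintro ⟨hyW, hmax⟩
    by_contra hne
    push_neg at hne
    exact absurd (hmax z₁ (by simp [hz1])) (not_le.2 (hlt y hyW hne.1 hne.2))
  · rintro (rfl | rfl)
    · refine ⟨hz1, fun w hw => ?_⟩
      rcases eq_or_ne w y with rfl | h1
      · exact le_refl _
      rcases eq_or_ne w z₂ with rfl | h2
      · exact heq.ge
      · exact (hlt w (by simpa using hw) h1 h2).le
    · refine ⟨hz2, fun w hw => ?_⟩
      rw [← heq]
      rcases eq_or_ne w z₁ with rfl | h1
      · exact le_refl _
      rcases eq_or_ne w y with rfl | h2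
      · exact le_of_eq heq.symm
      · exact (hlt w (by simpa using hw) h1 h2).le

end Helpers

/-- If a normalized Thiele counting function `h` satisfies `h(x) > 1` at the minimal such point
`x ∈ {2,...,m-1}`, then the induced sequential Thiele rule fails clone-rejection: in the profile
with `ℓ` voters approving `S = {c₁,...,c_x}` (where `ℓ(h(x)-1) > 1`), `x` voters approving
`{c₁,c₂}`, and `x+2-i` voters approving only `c_i` for each `i ∈ {3,...,x+1}`, the rule uniquely
elects `S` at size `x`, a committee containing the clones `c₁` and `c₂`. -/
theorem thiele_above_cc_violates_cloneRejection
    (hm : 3 ≤ Fintype.card C)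
    (h : ℕ → ℝ) (hpos : ∀ y, 0 ≤ h y) (hmono : Monotone h)
    (h0 : h 0 = 0) (h1 : h 1 = 1)
    (x : ℕ) (hx2 : 2 ≤ x) (hxm : x ≤ Fintype.card C - 1)
    (hmin : ∀ j, 1 ≤ j → j < x → h j = 1) (hgt : h x > 1)
    (ℓ : ℕ) (hℓ : (ℓ : ℝ) * (h x - 1) > 1)
    (cand : ℕ → C)
    (hinj : ∀ i ∈ Finset.Icc 1 (x+1), ∀ j ∈ Finset.Icc 1 (x+1), cand i = cand j → i = j)
    (S : Finset C) (hS : S = (Finset.Icc 1 x).image cand)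
    (A : Profile C) (N₀ N₁ : Finset ℕ) (Nf : ℕ → Finset ℕ)
    (hd01 : Disjoint N₀ N₁)
    (hd0f : ∀ i ∈ Finset.Icc 3 (x+1), Disjoint N₀ (Nf i))
    (hd1f : ∀ i ∈ Finset.Icc 3 (x+1), Disjoint N₁ (Nf i))
    (hdff : ∀ i ∈ Finset.Icc 3 (x+1), ∀ j ∈ Finset.Icc 3 (x+1), i ≠ j →
      Disjoint (Nf i) (Nf j))
    (hvoters : A.voters = N₀ ∪ N₁ ∪ (Finset.Icc 3 (x+1)).biUnion Nf)
    (hc0 : N₀.card = ℓ) (hc1 : N₁.card = x)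
    (hcf : ∀ i ∈ Finset.Icc 3 (x+1), (Nf i).card = x + 2 - i)
    (hb0 : ∀ v ∈ N₀, A.ballot v = S)
    (hb1 : ∀ v ∈ N₁, A.ballot v = {cand 1, cand 2})
    (hbf : ∀ i ∈ Finset.Icc 3 (x+1), ∀ v ∈ Nf i, A.ballot v = {cand i}) :
    seqThiele h A x = {S} := by
    classical
  have hℓ0 : (0:ℝ) < ℓ := by
    rcases Nat.eq_zero_or_pos ℓ with rfl | hp
    · norm_num at hℓ
    · exact_mod_cast hp
  have hh2 : (1:ℝ) ≤ h 2 := by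
    have := hmono (show 1 ≤ 2 by norm_num)
    rwa [h1] at this
  have hcinj : ∀ i j, 1 ≤ i → i ≤ x+1 → 1 ≤ j → j ≤ x+1 → cand i = cand j → i = j := by
    intro i j hi1 hi2 hj1 hj2 hij
    exact hinj i (Finset.mem_Icc.2 ⟨hi1, hi2⟩) j (Finset.mem_Icc.2 ⟨hj1, hj2⟩) hij
  -- the score formula for this profile
  have hsc : ∀ W : Finset C, scoreV (fun b W => h ((b ∩ W).card)) A W =
      (ℓ:ℝ) * h ((S ∩ W).card) + (x:ℝ) * h ((({cand 1, cand 2} : Finset C) ∩ W).card)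
        + ∑ i ∈ Finset.Icc 3 (x+1), ((x+2-i : ℕ) : ℝ) * (if cand i ∈ W then 1 else 0) := by
    intro W
    have hdisj2 : Disjoint (N₀ ∪ N₁) ((Finset.Icc 3 (x+1)).biUnion Nf) := by
      rw [Finset.disjoint_union_left]
      exact ⟨(Finset.disjoint_biUnion_right _ _ _).2 hd0f,
        (Finset.disjoint_biUnion_right _ _ _).2 hd1f⟩
    have hpw : (↑(Finset.Icc 3 (x+1)) : Set ℕ).PairwiseDisjoint Nf := by
      intro i hi j hj hne
      exact hdff i (Finset.mem_coe.1 hi) j (Finset.mem_coe.1 hj) hne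
    simp only [scoreV]
    rw [hvoters, Finset.sum_union hdisj2, Finset.sum_union hd01, Finset.sum_biUnion hpw]
    congr 1
    · congr 1
      · rw [Finset.sum_congr rfl fun i hi => by rw [hb0 i hi], Finset.sum_const, hc0,
          nsmul_eq_mul]
      · rw [Finset.sum_congr rfl fun i hi => by rw [hb1 i hi], Finset.sum_const, hc1,
          nsmul_eq_mul]
    · refine Finset.sum_congr rfl fun i hi => ?_
      rw [Finset.sum_congr rfl fun w hw => by rw [hbf i hi w hw], Finset.sum_const, hcf i hi,
        nsmul_eq_mul]
      congr 1
      by_cases hm : cand i ∈ W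
      · rw [Finset.singleton_inter_of_mem hm, if_pos hm, Finset.card_singleton, h1]
      · rw [Finset.singleton_inter_of_notMem hm, if_neg hm, Finset.card_empty, h0]
  -- the index-level score function
  set g : Finset ℕ → ℝ := fun J =>
    (ℓ:ℝ) * h ((Finset.Icc 1 x ∩ J).card) + (x:ℝ) * h ((({1,2} : Finset ℕ) ∩ J).card)
      + ∑ i ∈ Finset.Icc 3 (x+1), ((x+2-i : ℕ) : ℝ) * (if i ∈ J then 1 else 0) with hgdef
  have hmemImg : ∀ (J : Finset ℕ), J ⊆ Finset.Icc 1 (x+1) → ∀ j, 1 ≤ j → j ≤ x+1 →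
      (cand j ∈ J.image cand ↔ j ∈ J) := by
    intro J hJ j hj1 hj2
    refine ⟨fun hm => ?_, fun hm => Finset.mem_image_of_mem _ hm⟩
    rcases Finset.mem_image.1 hm with ⟨i, hiJ, hci⟩
    have hi := Finset.mem_Icc.1 (hJ hiJ)
    have hij := hcinj i j hi.1 hi.2 hj1 hj2 hci
    rwa [← hij]
  have hinjOn2 : ∀ (J₁ J₂ : Finset ℕ), J₁ ⊆ Finset.Icc 1 (x+1) → J₂ ⊆ Finset.Icc 1 (x+1) →
      Set.InjOn cand (↑J₁ ∪ ↑J₂) := by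
    intro J₁ J₂ hs1 hs2 i hi j hj hij
    have hi' : i ∈ Finset.Icc 1 (x+1) := by
      rcases hi with hi | hi
      · exact hs1 (Finset.mem_coe.1 hi)
      · exact hs2 (Finset.mem_coe.1 hi)
    have hj' : j ∈ Finset.Icc 1 (x+1) := by
      rcases hj with hj | hj
      · exact hs1 (Finset.mem_coe.1 hj)
      · exact hs2 (Finset.mem_coe.1 hj)
    have hi'' := Finset.mem_Icc.1 hi'
    have hj'' := Finset.mem_Icc.1 hj'
    exact hcinj i j hi''.1 hi''.2 hj''.1 hj''.2 hij
  have hcardImg : ∀ (J : Finset ℕ), J ⊆ Finset.Icc 1 (x+1) → (J.image cand).card = J.card := by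
    intro J hJ
    apply Finset.card_image_of_injOn
    intro i hi j hj hij
    have hi' := Finset.mem_Icc.1 (hJ (Finset.mem_coe.1 hi))
    have hj' := Finset.mem_Icc.1 (hJ (Finset.mem_coe.1 hj))
    exact hcinj i j hi'.1 hi'.2 hj'.1 hj'.2 hij
  have hIccsub : Finset.Icc 1 x ⊆ Finset.Icc 1 (x+1) := by
    intro i hi; rw [Finset.mem_Icc] at *; omega
  have h12sub : ({1,2} : Finset ℕ) ⊆ Finset.Icc 1 (x+1) := by
    intro i hi
    simp only [Finset.mem_insert, Finset.mem_singleton] at hi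
    rw [Finset.mem_Icc]; omega
  have hGg : ∀ (J : Finset ℕ), J ⊆ Finset.Icc 1 (x+1) →
      scoreV (fun b W => h ((b ∩ W).card)) A (J.image cand) = g J := by
    intro J hJ
    rw [hsc]
    simp only [hgdef]
    have e1 : S ∩ J.image cand = (Finset.Icc 1 x ∩ J).image cand := by
      rw [hS, ← Finset.image_inter_of_injOn _ _ (hinjOn2 _ _ hIccsub hJ)]
    have e2 : ({cand 1, cand 2} : Finset C) ∩ J.image cand
        = (({1,2} : Finset ℕ) ∩ J).image cand := by
      have h12 : ({cand 1, cand 2} : Finset C) = ({1,2} : Finset ℕ).image cand := by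
        rw [Finset.image_insert, Finset.image_singleton]
      rw [h12, ← Finset.image_inter_of_injOn _ _ (hinjOn2 _ _ h12sub hJ)]
    rw [e1, e2, hcardImg _ (fun i hi => hJ (Finset.mem_of_mem_inter_right hi)),
      hcardImg _ (fun i hi => hJ (Finset.mem_of_mem_inter_right hi))]
    congr 1
    refine Finset.sum_congr rfl fun i hi => ?_
    have hi' := Finset.mem_Icc.1 hi
    simp only [hmemImg J hJ i (by omega) (by omega)]
  have hsm : ∀ (J : Finset ℕ) (j : ℕ), j ∉ J →
      (∑ i ∈ Finset.Icc 3 (x+1), ((x+2-i : ℕ) : ℝ) * (if i ∈ insert j J then 1 else 0))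
        = (∑ i ∈ Finset.Icc 3 (x+1), ((x+2-i : ℕ) : ℝ) * (if i ∈ J then 1 else 0))
          + (if j ∈ Finset.Icc 3 (x+1) then ((x+2-j : ℕ) : ℝ) else 0) := by
    intro J j hjJ
    by_cases hj : j ∈ Finset.Icc 3 (x+1)
    · rw [if_pos hj, Finset.sum_eq_sum_sdiff_singleton_add hj,
        Finset.sum_eq_sum_sdiff_singleton_add hj]
      have hterms : ∀ i ∈ Finset.Icc 3 (x+1) \ {j},
          ((x+2-i : ℕ) : ℝ) * (if i ∈ insert j J then 1 else 0)
            = ((x+2-i : ℕ) : ℝ) * (if i ∈ J then 1 else 0) := by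
        intro i hi
        have hne : i ≠ j := by
          rw [Finset.mem_sdiff, Finset.mem_singleton] at hi; exact hi.2
        simp [Finset.mem_insert, hne]
      rw [Finset.sum_congr rfl hterms, if_pos (Finset.mem_insert_self j J), if_neg hjJ]
      ring
    · rw [if_neg hj, add_zero]
      refine Finset.sum_congr rfl fun i hi => ?_
      have hne : i ≠ j := fun e => hj (e ▸ hi)
      simp [Finset.mem_insert, hne]
  have hscg : ∀ (J : Finset ℕ), J ⊆ Finset.Icc 1 (x+1) → ∀ j, 1 ≤ j → j ≤ x+1 →
      scoreV (fun b W => h ((b ∩ W).card)) A (insert (cand j) (J.image cand))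
        = g (insert j J) := by
    intro J hJ j hj1 hj2
    rw [← Finset.image_insert]
    exact hGg _ (Finset.insert_subset (Finset.mem_Icc.2 ⟨hj1, hj2⟩) hJ)
  have hscout : ∀ (J : Finset ℕ), J ⊆ Finset.Icc 1 (x+1) → ∀ y : C,
      (∀ j, 1 ≤ j → j ≤ x+1 → y ≠ cand j) →
      scoreV (fun b W => h ((b ∩ W).card)) A (insert y (J.image cand)) = g J := by
    intro J hJ y hy
    rw [← hGg J hJ, hsc, hsc]
    have e1 : S ∩ insert y (J.image cand) = S ∩ J.image cand := by
      apply Finset.inter_insert_of_notMem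
      rw [hS]
      intro hm
      rcases Finset.mem_image.1 hm with ⟨i, hi, hci⟩
      have hi' := Finset.mem_Icc.1 hi
      exact hy i hi'.1 (by omega) hci.symm
    have e2 : ({cand 1, cand 2} : Finset C) ∩ insert y (J.image cand)
        = ({cand 1, cand 2} : Finset C) ∩ J.image cand := by
      apply Finset.inter_insert_of_notMem
      intro hm
      rcases Finset.mem_insert.1 hm with hm | hm
      · exact hy 1 le_rfl (by omega) hm
      · exact hy 2 (by omega) (by omega) (Finset.mem_singleton.1 hm)
    have e3 : ∀ i ∈ Finset.Icc 3 (x+1),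
        ((x+2-i : ℕ) : ℝ) * (if cand i ∈ insert y (J.image cand) then 1 else 0)
          = ((x+2-i : ℕ) : ℝ) * (if cand i ∈ J.image cand then 1 else 0) := by
      intro i hi
      have hi' := Finset.mem_Icc.1 hi
      have hne : cand i ≠ y := fun e => hy i (by omega) (by omega) e.symm
      simp [Finset.mem_insert, hne]
    rw [e1, e2, Finset.sum_congr rfl e3]
  have hclass : ∀ y : C,
      (∃ j, 1 ≤ j ∧ j ≤ x+1 ∧ y = cand j) ∨ (∀ j, 1 ≤ j → j ≤ x+1 → y ≠ cand j) := by
    intro y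
    by_cases hy : ∃ j, 1 ≤ j ∧ j ≤ x+1 ∧ y = cand j
    · exact Or.inl hy
    · right; intro j hj1 hj2 he; exact hy ⟨j, hj1, hj2, he⟩
  have gval : ∀ (J : Finset ℕ) (n₁ n₂ : ℕ) (r : ℝ),
      (Finset.Icc 1 x ∩ J).card = n₁ → ((({1,2} : Finset ℕ)) ∩ J).card = n₂ →
      (∑ i ∈ Finset.Icc 3 (x+1), ((x+2-i : ℕ) : ℝ) * (if i ∈ J then 1 else 0)) = r →
      g J = (ℓ:ℝ) * h n₁ + (x:ℝ) * h n₂ + r := by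
    intro J n₁ n₂ r e₁ e₂ e₃
    simp only [hgdef]
    rw [e₁, e₂, e₃]
  -- the middle greedy steps
  have stepMid : ∀ k a, 1 ≤ k → k + 2 ≤ x → (a = 1 ∨ a = 2) →
      genOf (fun b W => h ((b ∩ W).card)) A ((insert a (Finset.Icc 3 (k+1))).image cand)
        = {cand (k+2)} := by
    intro k a hk1 hk2 ha
    set K : Finset ℕ := insert a (Finset.Icc 3 (k+1)) with hK
    have haK : ∀ j, j ∈ K ↔ (j = a ∨ (3 ≤ j ∧ j ≤ k+1)) := by
      intro j; simp [hK, Finset.mem_Icc]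
    have hKsub : K ⊆ Finset.Icc 1 (x+1) := by
      intro i hi; rw [haK] at hi; rw [Finset.mem_Icc]; omega
    have hKsubx : K ⊆ Finset.Icc 1 x := by
      intro i hi; rw [haK] at hi; rw [Finset.mem_Icc]; omega
    have hKcard : K.card = k := by
      rw [hK, Finset.card_insert_of_notMem (by rw [Finset.mem_Icc]; omega), Nat.card_Icc]
      omega
    have h12K : ({1,2} : Finset ℕ) ∩ K = {a} := by
      ext i
      simp only [Finset.mem_inter, Finset.mem_insert, Finset.mem_singleton, haK]
      omega
    set σ : ℝ := ∑ i ∈ Finset.Icc 3 (x+1), ((x+2-i : ℕ) : ℝ) * (if i ∈ K then 1 else 0) with hσ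
    have hTne : (k+2) ∉ K := by rw [haK]; omega
    have htar : scoreV (fun b W => h ((b ∩ W).card)) A
        (insert (cand (k+2)) (K.image cand)) = (ℓ:ℝ) + (x:ℝ) + (σ + ((x-k : ℕ) : ℝ)) := by
      have e1 : (Finset.Icc 1 x ∩ insert (k+2) K).card = k+1 := by
        rw [Finset.inter_eq_right.2
            (Finset.insert_subset (Finset.mem_Icc.2 ⟨by omega, by omega⟩) hKsubx),
          Finset.card_insert_of_notMem hTne, hKcard]
      have e2 : (({1,2} : Finset ℕ) ∩ insert (k+2) K).card = 1 := by
        have hne : (k+2) ∉ ({1,2} : Finset ℕ) := by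
          simp only [Finset.mem_insert, Finset.mem_singleton]; omega
        rw [Finset.inter_insert_of_notMem hne, h12K, Finset.card_singleton]
      have e3 : (∑ i ∈ Finset.Icc 3 (x+1),
            ((x+2-i : ℕ) : ℝ) * (if i ∈ insert (k+2) K then 1 else 0))
          = σ + ((x-k : ℕ) : ℝ) := by
        rw [hsm K (k+2) hTne, if_pos (Finset.mem_Icc.2 ⟨by omega, by omega⟩), ← hσ,
          show x+2-(k+2) = x-k from by omega]
      rw [hscg K hKsub (k+2) (by omega) (by omega), gval _ _ _ _ e1 e2 e3,
        hmin (k+1) (by omega) (by omega), h1]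
      ring
    apply genOf_eq_singleton
    · rw [hmemImg K hKsub (k+2) (by omega) (by omega)]
      exact hTne
    · intro y hyW hyne
      rw [htar]
      have hxk2 : (2:ℝ) ≤ ((x-k : ℕ) : ℝ) := by exact_mod_cast (by omega : 2 ≤ x - k)
      rcases hclass y with ⟨j, hj1, hj2, rfl⟩ | hout
      · have hjK : j ∉ K := by
          rw [← hmemImg K hKsub j hj1 hj2]; exact hyW
        have hjk2 : j ≠ k+2 := fun e => hyne (by rw [e])
        rw [haK] at hjK
        rw [hscg K hKsub j hj1 hj2]
        rcases (by omega : j ≤ 2 ∨ (k+3 ≤ j ∧ j ≤ x) ∨ j = x+1) with hj | hj | hj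
        · have e1 : (Finset.Icc 1 x ∩ insert j K).card = k+1 := by
            rw [Finset.inter_eq_right.2
                (Finset.insert_subset (Finset.mem_Icc.2 ⟨by omega, by omega⟩) hKsubx),
              Finset.card_insert_of_notMem (by rw [haK]; omega), hKcard]
          have e2 : (({1,2} : Finset ℕ) ∩ insert j K).card = 2 := by
            have hja : ({1,2} : Finset ℕ) ∩ insert j K = {j, a} := by
              ext i
              simp only [Finset.mem_inter, Finset.mem_insert, Finset.mem_singleton, haK]
              omega
            rw [hja, Finset.card_insert_of_notMem (by rw [Finset.mem_singleton]; omega),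
              Finset.card_singleton]
          have e3 : (∑ i ∈ Finset.Icc 3 (x+1),
                ((x+2-i : ℕ) : ℝ) * (if i ∈ insert j K then 1 else 0)) = σ + 0 := by
            rw [hsm K j (by rw [haK]; omega), if_neg (by rw [Finset.mem_Icc]; omega), ← hσ]
          rw [gval _ _ _ _ e1 e2 e3, hmin (k+1) (by omega) (by omega),
            hmin 2 (by omega) (by omega)]
          linarith
        · have e1 : (Finset.Icc 1 x ∩ insert j K).card = k+1 := by
            rw [Finset.inter_eq_right.2
                (Finset.insert_subset (Finset.mem_Icc.2 ⟨by omega, by omega⟩) hKsubx),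
              Finset.card_insert_of_notMem (by rw [haK]; omega), hKcard]
          have e2 : (({1,2} : Finset ℕ) ∩ insert j K).card = 1 := by
            rw [Finset.inter_insert_of_notMem
                (by simp only [Finset.mem_insert, Finset.mem_singleton]; omega),
              h12K, Finset.card_singleton]
          have e3 : (∑ i ∈ Finset.Icc 3 (x+1),
                ((x+2-i : ℕ) : ℝ) * (if i ∈ insert j K then 1 else 0))
              = σ + ((x+2-j : ℕ) : ℝ) := by
            rw [hsm K j (by rw [haK]; omega), if_pos (Finset.mem_Icc.2 ⟨by omega, by omega⟩),
              ← hσ]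
          rw [gval _ _ _ _ e1 e2 e3, hmin (k+1) (by omega) (by omega), h1]
          have hlt2 : ((x+2-j : ℕ) : ℝ) < ((x-k : ℕ) : ℝ) := by
            exact_mod_cast (by omega : x+2-j < x-k)
          linarith
        · subst hj
          have e1 : (Finset.Icc 1 x ∩ insert (x+1) K).card = k := by
            rw [Finset.inter_insert_of_notMem (by rw [Finset.mem_Icc]; omega),
              Finset.inter_eq_right.2 hKsubx, hKcard]
          have e2 : (({1,2} : Finset ℕ) ∩ insert (x+1) K).card = 1 := by
            rw [Finset.inter_insert_of_notMem
                (by simp only [Finset.mem_insert, Finset.mem_singleton]; omega),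
              h12K, Finset.card_singleton]
          have e3 : (∑ i ∈ Finset.Icc 3 (x+1),
                ((x+2-i : ℕ) : ℝ) * (if i ∈ insert (x+1) K then 1 else 0)) = σ + 1 := by
            rw [hsm K (x+1) (by rw [haK]; omega),
              if_pos (Finset.mem_Icc.2 ⟨by omega, le_rfl⟩), ← hσ,
              show x+2-(x+1) = 1 from by omega, Nat.cast_one]
          rw [gval _ _ _ _ e1 e2 e3, hmin k (by omega) (by omega), h1]
          linarith
      · rw [hscout K hKsub y hout]
        have e1 : (Finset.Icc 1 x ∩ K).card = k := by
          rw [Finset.inter_eq_right.2 hKsubx, hKcard]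
        have e2 : (({1,2} : Finset ℕ) ∩ K).card = 1 := by rw [h12K, Finset.card_singleton]
        rw [gval _ _ _ _ e1 e2 hσ.symm, hmin k (by omega) (by omega), h1]
        linarith
  -- the last greedy step
  have stepLast : ∀ a b, ((a = 1 ∧ b = 2) ∨ (a = 2 ∧ b = 1)) →
      genOf (fun b' W => h ((b' ∩ W).card)) A ((insert a (Finset.Icc 3 x)).image cand)
        = {cand b} := by
    intro a b hab
    set K : Finset ℕ := insert a (Finset.Icc 3 x) with hK
    have haK : ∀ j, j ∈ K ↔ (j = a ∨ (3 ≤ j ∧ j ≤ x)) := by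
      intro j; simp [hK, Finset.mem_Icc]
    have hKsub : K ⊆ Finset.Icc 1 (x+1) := by
      intro i hi; rw [haK] at hi; rw [Finset.mem_Icc]; omega
    have hKsubx : K ⊆ Finset.Icc 1 x := by
      intro i hi; rw [haK] at hi; rw [Finset.mem_Icc]; omega
    have hKcard : K.card = x - 1 := by
      rw [hK, Finset.card_insert_of_notMem (by rw [Finset.mem_Icc]; omega), Nat.card_Icc]
      omega
    have h12K : ({1,2} : Finset ℕ) ∩ K = {a} := by
      ext i
      simp only [Finset.mem_inter, Finset.mem_insert, Finset.mem_singleton, haK]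
      omega
    set σ : ℝ := ∑ i ∈ Finset.Icc 3 (x+1), ((x+2-i : ℕ) : ℝ) * (if i ∈ K then 1 else 0) with hσ
    have hbK : b ∉ K := by rw [haK]; omega
    have htar : scoreV (fun b' W => h ((b' ∩ W).card)) A
        (insert (cand b) (K.image cand)) = (ℓ:ℝ) * h x + (x:ℝ) * h 2 + (σ + 0) := by
      have e1 : (Finset.Icc 1 x ∩ insert b K).card = x := by
        rw [Finset.inter_eq_right.2
            (Finset.insert_subset (Finset.mem_Icc.2 ⟨by omega, by omega⟩) hKsubx),
          Finset.card_insert_of_notMem hbK, hKcard]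
        omega
      have e2 : (({1,2} : Finset ℕ) ∩ insert b K).card = 2 := by
        have hba : ({1,2} : Finset ℕ) ∩ insert b K = {b, a} := by
          ext i
          simp only [Finset.mem_inter, Finset.mem_insert, Finset.mem_singleton, haK]
          omega
        rw [hba, Finset.card_insert_of_notMem (by rw [Finset.mem_singleton]; omega),
          Finset.card_singleton]
      have e3 : (∑ i ∈ Finset.Icc 3 (x+1),
            ((x+2-i : ℕ) : ℝ) * (if i ∈ insert b K then 1 else 0)) = σ + 0 := by
        rw [hsm K b hbK, if_neg (by rw [Finset.mem_Icc]; omega), ← hσ]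
      rw [hscg K hKsub b (by omega) (by omega), gval _ _ _ _ e1 e2 e3]
    have hkey : (ℓ:ℝ) + (x:ℝ) + σ + 1 < (ℓ:ℝ) * h x + (x:ℝ) * h 2 + (σ + 0) := by
      have hx0 : (0:ℝ) ≤ (x:ℝ) := Nat.cast_nonneg x
      have h2x : (x:ℝ) * 1 ≤ (x:ℝ) * h 2 := mul_le_mul_of_nonneg_left hh2 hx0
      have hexp : (ℓ:ℝ) * (h x - 1) = (ℓ:ℝ) * h x - (ℓ:ℝ) := by ring
      linarith [hℓ]
    apply genOf_eq_singleton
    · rw [hmemImg K hKsub b (by omega) (by omega)]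
      exact hbK
    · intro y hyW hyne
      rw [htar]
      rcases hclass y with ⟨j, hj1, hj2, rfl⟩ | hout
      · have hjK : j ∉ K := by rw [← hmemImg K hKsub j hj1 hj2]; exact hyW
        rw [haK] at hjK
        have hjb : j ≠ b := fun e => hyne (by rw [e])
        have hjx : j = x+1 := by omega
        subst hjx
        rw [hscg K hKsub (x+1) (by omega) le_rfl]
        have e1 : (Finset.Icc 1 x ∩ insert (x+1) K).card = x - 1 := by
          rw [Finset.inter_insert_of_notMem (by rw [Finset.mem_Icc]; omega),
            Finset.inter_eq_right.2 hKsubx, hKcard]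
        have e2 : (({1,2} : Finset ℕ) ∩ insert (x+1) K).card = 1 := by
          rw [Finset.inter_insert_of_notMem
              (by simp only [Finset.mem_insert, Finset.mem_singleton]; omega),
            h12K, Finset.card_singleton]
        have e3 : (∑ i ∈ Finset.Icc 3 (x+1),
              ((x+2-i : ℕ) : ℝ) * (if i ∈ insert (x+1) K then 1 else 0)) = σ + 1 := by
          rw [hsm K (x+1) (by rw [haK]; omega),
            if_pos (Finset.mem_Icc.2 ⟨by omega, le_rfl⟩), ← hσ,
            show x+2-(x+1) = 1 from by omega, Nat.cast_one]
        rw [gval _ _ _ _ e1 e2 e3, hmin (x-1) (by omega) (by omega), h1]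
        linarith [hkey]
      · rw [hscout K hKsub y hout]
        have e1 : (Finset.Icc 1 x ∩ K).card = x - 1 := by
          rw [Finset.inter_eq_right.2 hKsubx, hKcard]
        have e2 : (({1,2} : Finset ℕ) ∩ K).card = 1 := by rw [h12K, Finset.card_singleton]
        rw [gval _ _ _ _ e1 e2 hσ.symm, hmin (x-1) (by omega) (by omega), h1]
        linarith [hkey]
  -- the first greedy step
  have hs0 : (∑ i ∈ Finset.Icc 3 (x+1),
      ((x+2-i : ℕ) : ℝ) * (if i ∈ (∅ : Finset ℕ) then 1 else 0)) = 0 := by simp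
  have hg1 : ∀ j, 1 ≤ j → j ≤ 2 →
      scoreV (fun b W => h ((b ∩ W).card)) A (insert (cand j) (∅ : Finset C))
        = (ℓ:ℝ) + (x:ℝ) := by
    intro j hj1 hj2
    have hsc' := hscg ∅ (Finset.empty_subset _) j hj1 (by omega)
    rw [Finset.image_empty] at hsc'
    rw [hsc']
    have e1 : (Finset.Icc 1 x ∩ insert j ∅).card = 1 := by
      have he : Finset.Icc 1 x ∩ insert j ∅ = {j} := by
        ext i; simp [Finset.mem_Icc]; omega
      rw [he, Finset.card_singleton]
    have e2 : (({1,2} : Finset ℕ) ∩ insert j ∅).card = 1 := by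
      have he : ({1,2} : Finset ℕ) ∩ insert j ∅ = {j} := by
        ext i; simp; omega
      rw [he, Finset.card_singleton]
    have e3 : (∑ i ∈ Finset.Icc 3 (x+1),
          ((x+2-i : ℕ) : ℝ) * (if i ∈ insert j (∅ : Finset ℕ) then 1 else 0)) = 0 := by
      rw [hsm ∅ j (Finset.notMem_empty _), hs0, if_neg (by rw [Finset.mem_Icc]; omega),
        add_zero]
    rw [gval _ _ _ _ e1 e2 e3, h1]
    ring
  have step0 : genOf (fun b W => h ((b ∩ W).card)) A (∅ : Finset C) = {cand 1, cand 2} := by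
    apply genOf_eq_pair _ _ _ _ _ (Finset.notMem_empty _) (Finset.notMem_empty _)
    · rw [hg1 1 le_rfl (by omega), hg1 2 (by omega) le_rfl]
    · intro y hy0 hy1 hy2
      rw [hg1 1 le_rfl (by omega)]
      have hx2' : (2:ℝ) ≤ (x:ℝ) := by exact_mod_cast hx2
      rcases hclass y with ⟨j, hj1, hj2, rfl⟩ | hout
      · have hj3 : 3 ≤ j := by
          rcases (by omega : j = 1 ∨ j = 2 ∨ 3 ≤ j) with rfl | rfl | hj
          · exact absurd rfl hy1
          · exact absurd rfl hy2
          · exact hj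
        have hsc' := hscg ∅ (Finset.empty_subset _) j hj1 hj2
        rw [Finset.image_empty] at hsc'
        rw [hsc']
        rcases (by omega : j ≤ x ∨ j = x+1) with hjx | hjx
        · have e1 : (Finset.Icc 1 x ∩ insert j ∅).card = 1 := by
            have he : Finset.Icc 1 x ∩ insert j ∅ = {j} := by
              ext i; simp [Finset.mem_Icc]; omega
            rw [he, Finset.card_singleton]
          have e2 : (({1,2} : Finset ℕ) ∩ insert j ∅).card = 0 := by
            have he : ({1,2} : Finset ℕ) ∩ insert j ∅ = ∅ := by
              ext i; simp; omega
            rw [he, Finset.card_empty]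
          have e3 : (∑ i ∈ Finset.Icc 3 (x+1),
                ((x+2-i : ℕ) : ℝ) * (if i ∈ insert j (∅ : Finset ℕ) then 1 else 0))
              = ((x+2-j : ℕ) : ℝ) := by
            rw [hsm ∅ j (Finset.notMem_empty _), hs0,
              if_pos (Finset.mem_Icc.2 ⟨hj3, by omega⟩), zero_add]
          rw [gval _ _ _ _ e1 e2 e3, h1, h0]
          have hlt2 : ((x+2-j : ℕ) : ℝ) < (x:ℝ) := by
            exact_mod_cast (by omega : x+2-j < x)
          linarith
        · subst hjx
          have e1 : (Finset.Icc 1 x ∩ insert (x+1) ∅).card = 0 := by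
            have he : Finset.Icc 1 x ∩ insert (x+1) ∅ = ∅ := by
              ext i; simp [Finset.mem_Icc]; try omega
            rw [he, Finset.card_empty]
          have e2 : (({1,2} : Finset ℕ) ∩ insert (x+1) ∅).card = 0 := by
            have he : ({1,2} : Finset ℕ) ∩ insert (x+1) ∅ = ∅ := by
              ext i; simp; try omega
            rw [he, Finset.card_empty]
          have e3 : (∑ i ∈ Finset.Icc 3 (x+1),
                ((x+2-i : ℕ) : ℝ) * (if i ∈ insert (x+1) (∅ : Finset ℕ) then 1 else 0))
              = 1 := by
            rw [hsm ∅ (x+1) (Finset.notMem_empty _), hs0,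
              if_pos (Finset.mem_Icc.2 ⟨by omega, le_rfl⟩), zero_add,
              show x+2-(x+1) = 1 from by omega, Nat.cast_one]
          rw [gval _ _ _ _ e1 e2 e3, h0]
          linarith
      · have hsc' := hscout ∅ (Finset.empty_subset _) y hout
        rw [Finset.image_empty] at hsc'
        rw [hsc']
        have hgempty : g ∅ = 0 := by
          simp only [hgdef]
          rw [Finset.inter_empty, Finset.inter_empty, Finset.card_empty, h0, hs0]
          ring
        rw [hgempty]
        linarith
  -- the greedy trajectory
  have traj : ∀ k, 1 ≤ k → k ≤ x - 1 →
      seqRule (fun b W => h ((b ∩ W).card)) A k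
        = {(insert 1 (Finset.Icc 3 (k+1))).image cand,
           (insert 2 (Finset.Icc 3 (k+1))).image cand} := by
    intro k
    induction k with
    | zero => intro h' _; exact absurd h' (by omega)
    | succ n ih =>
      intro _ hk
      rcases Nat.eq_zero_or_pos n with rfl | hn
      · rw [seqRule_succ, seqRule_zero]
        simp only [Finset.singleton_biUnion]
        rw [step0]
        rw [show Finset.Icc 3 (0+1+1) = (∅ : Finset ℕ) from Finset.Icc_eq_empty (by omega)]
        simp
      · have hn1 : 1 ≤ n := hn
        rw [seqRule_succ, ih hn1 (by omega)]
        simp only [Finset.biUnion_insert, Finset.singleton_biUnion]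
        rw [stepMid n 1 hn1 (by omega) (Or.inl rfl), stepMid n 2 hn1 (by omega) (Or.inr rfl),
          Finset.image_singleton, Finset.image_singleton]
        have hident : ∀ a : ℕ, insert (cand (n+2)) ((insert a (Finset.Icc 3 (n+1))).image cand)
            = (insert a (Finset.Icc 3 (n+1+1))).image cand := by
          intro a
          rw [← Finset.image_insert]
          congr 1
          ext i
          simp only [Finset.mem_insert, Finset.mem_Icc]
          omega
        rw [hident 1, hident 2, ← Finset.insert_eq]
  -- assemble
  show seqRule (fun b W => h ((b ∩ W).card)) A x = {S}
  have hxx : x = (x-1) + 1 := by omega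
  rw [hxx, seqRule_succ, traj (x-1) (by omega) le_rfl]
  simp only [Finset.biUnion_insert, Finset.singleton_biUnion]
  rw [show Finset.Icc 3 (x-1+1) = Finset.Icc 3 x from by rw [show x-1+1 = x from by omega],
    stepLast 1 2 (Or.inl ⟨rfl, rfl⟩), stepLast 2 1 (Or.inr ⟨rfl, rfl⟩),
    Finset.image_singleton, Finset.image_singleton]
  have hfin : ∀ a b : ℕ, ((a = 1 ∧ b = 2) ∨ (a = 2 ∧ b = 1)) →
      insert (cand b) ((insert a (Finset.Icc 3 x)).image cand) = S := by
    intro a b hab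
    rw [← Finset.image_insert, hS]
    congr 1
    ext i
    simp only [Finset.mem_insert, Finset.mem_Icc]
    omega
  rw [hfin 1 2 (Or.inl ⟨rfl, rfl⟩), hfin 2 1 (Or.inr ⟨rfl, rfl⟩)]
  simp
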